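/- Under the hypotheses of the magnitude rank-one update (Z positive definite, Z[ζ] = [[Z,ζ],[ζᵀ,1]] positive definite, w = Z⁻¹1), the differential magnitude Mag(Z[ζ]) − Mag(Z) = (1 − ζᵀw)²/(1 − ζᵀZ⁻¹ζ) is nonnegative. Hence adjoining a point never decreases magnitude. -/

import Mathlib

/-! With `u = Z⁻¹ζ`, `w = Z⁻¹1`, `s = 1 - ζᵀu` and `t = (1 - ζᵀw) / s`, the vector `(w - t u, t)`
solves `Z[ζ] x = 1`, so `Mag Z[ζ] = 1ᵀw - t 1ᵀu + t = Mag Z + t (1 - ζᵀw)`, because `1ᵀu = ζᵀw` by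
symmetry of `Z`. The Schur complement `s` is positive: it is the value of the quadratic form of
`Z[ζ]` at `(-u, 1)`. -/

open Matrix

/-- Magnitude of an invertible matrix: the sum of the entries of its inverse. -/
noncomputable def Mag {m : Type*} [Fintype m] [DecidableEq m]
    (M : Matrix m m ℝ) : ℝ := ∑ i, ∑ j, M⁻¹ i j

/-- The bordered matrix `Z[ζ] = [[Z, ζ], [ζᵀ, 1]]`. -/
noncomputable def border {n : ℕ} (Z : Matrix (Fin n) (Fin n) ℝ) (ζ : Fin n → ℝ) :
    Matrix (Fin n ⊕ Unit) (Fin n ⊕ Unit) ℝ :=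
  Matrix.fromBlocks Z (Matrix.of fun i _ => ζ i) (Matrix.of fun _ j => ζ j)
    (Matrix.of fun _ _ => (1 : ℝ))

theorem mag_eq_sum_of_mulVec_eq_one {m : Type*} [Fintype m] [DecidableEq m]
    {M : Matrix m m ℝ} (hM : IsUnit M.det) {x : m → ℝ} (hx : M *ᵥ x = 1) :
    Mag M = ∑ i, x i := by
  have hx' : x = M⁻¹ *ᵥ 1 := by rw [← hx, mulVec_mulVec, nonsing_inv_mul _ hM, one_mulVec]
  simp [Mag, hx', mulVec, dotProduct]

theorem Matrix.IsSymm.sum_mulVec {m : Type*} [Fintype m] {A : Matrix m m ℝ} (hA : A.IsSymm)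
    (v : m → ℝ) : ∑ i, (A *ᵥ v) i = v ⬝ᵥ (A *ᵥ 1) := by
  rw [← one_dotProduct, dotProduct_mulVec, dotProduct_comm, ← mulVec_transpose, hA.eq]

section Border

variable {n : ℕ} (Z : Matrix (Fin n) (Fin n) ℝ) (ζ : Fin n → ℝ)

theorem border_mulVec_sumElim (x : Fin n → ℝ) (t : ℝ) :
    border Z ζ *ᵥ Sum.elim x (fun _ => t) =
      Sum.elim (Z *ᵥ x + t • ζ) (fun _ => ζ ⬝ᵥ x + t) := by
  ext (i | u) <;> simp [border, mulVec, dotProduct, mul_comm]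

theorem det_border (hZ : IsUnit Z.det) :
    (border Z ζ).det = Z.det * (1 - ζ ⬝ᵥ (Z⁻¹ *ᵥ ζ)) := by
  let := Z.invertibleOfIsUnitDet hZ
  rw [border, det_fromBlocks₁₁, invOf_eq_nonsing_inv]
  congr 1
  rw [det_unique, dotProduct_mulVec]
  simp [Matrix.mul_apply, vecMul, dotProduct]

variable {Z ζ}

theorem one_sub_dotProduct_inv_mulVec_pos (hZ : IsUnit Z.det) (hB : (border Z ζ).PosDef) :
    0 < 1 - ζ ⬝ᵥ (Z⁻¹ *ᵥ ζ) := by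
  set v : Fin n ⊕ Unit → ℝ := Sum.elim (-(Z⁻¹ *ᵥ ζ)) fun _ => 1
  have hv : v ≠ 0 := fun h => by simpa [v] using congrFun h (Sum.inr ())
  have hBv : border Z ζ *ᵥ v = Sum.elim (0 : Fin n → ℝ) fun _ => 1 - ζ ⬝ᵥ (Z⁻¹ *ᵥ ζ) := by
    rw [border_mulVec_sumElim, mulVec_neg, mulVec_mulVec, mul_nonsing_inv _ hZ, one_mulVec]
    simp [neg_add_eq_sub]
  simpa [v, hBv, dotProduct] using hB.dotProduct_mulVec_pos hv

theorem mag_border_sub_mag (hZ : IsUnit Z.det) (hZs : Z.IsSymm)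
    (hs : 1 - ζ ⬝ᵥ (Z⁻¹ *ᵥ ζ) ≠ 0) :
    Mag (border Z ζ) - Mag Z =
      (1 - ζ ⬝ᵥ (Z⁻¹ *ᵥ fun _ => 1)) ^ 2 / (1 - ζ ⬝ᵥ (Z⁻¹ *ᵥ ζ)) := by
  set u := Z⁻¹ *ᵥ ζ
  set w : Fin n → ℝ := Z⁻¹ *ᵥ 1
  set c := ζ ⬝ᵥ w
  set t := (1 - c) / (1 - ζ ⬝ᵥ u)
  have hZw : Z *ᵥ w = 1 := by rw [mulVec_mulVec, mul_nonsing_inv _ hZ, one_mulVec]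
  have hZu : Z *ᵥ u = ζ := by rw [mulVec_mulVec, mul_nonsing_inv _ hZ, one_mulVec]
  have hsolve : border Z ζ *ᵥ Sum.elim (w - t • u) (fun _ => t) = 1 := by
    have hlast : c - t * (ζ ⬝ᵥ u) + t = 1 := by
      simp only [t]; field_simp; ring
    rw [border_mulVec_sumElim, mulVec_sub, mulVec_smul, hZw, hZu, sub_add_cancel,
      dotProduct_sub, dotProduct_smul, smul_eq_mul, hlast]
    exact Sum.elim_one_one
  have hB : IsUnit (border Z ζ).det := by
    rw [det_border Z ζ hZ]; exact hZ.mul hs.isUnit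
  have hsum_u : ∑ i, u i = c := hZs.inv.sum_mulVec ζ
  rw [mag_eq_sum_of_mulVec_eq_one hB hsolve, mag_eq_sum_of_mulVec_eq_one hZ hZw]
  simp only [Fintype.sum_sum_type, Sum.elim_inl, Sum.elim_inr, Pi.sub_apply, Pi.smul_apply,
    smul_eq_mul, Finset.sum_sub_distrib, ← Finset.mul_sum, hsum_u, Finset.univ_unique,
    Finset.sum_singleton]
  change _ = (1 - c) ^ 2 / _
  simp only [t]
  field_simp
  ring

end Border

theorem stmt13 {n : ℕ} (Z : Matrix (Fin n) (Fin n) ℝ) (ζ : Fin n → ℝ)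
    (hZ : Z.PosDef) (hB : (border Z ζ).PosDef) :
    Mag (border Z ζ) - Mag Z =
        (1 - ζ ⬝ᵥ (Z⁻¹ *ᵥ fun _ => 1)) ^ 2 / (1 - ζ ⬝ᵥ (Z⁻¹ *ᵥ ζ)) ∧
      Mag Z ≤ Mag (border Z ζ) := by
  have hZdet : IsUnit Z.det := hZ.det_pos.ne'.isUnit
  have hs := one_sub_dotProduct_inv_mulVec_pos hZdet hB
  have hmag := mag_border_sub_mag hZdet (isHermitian_iff_isSymm.1 hZ.isHermitian) hs.ne'
  refine ⟨hmag, sub_nonneg.1 ?_⟩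
  rw [hmag]
  positivity
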